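/- arXiv:2312.00503 — 2 statements merged into one kernel-verified Lean document; each statement's English description precedes it below -/
import Mathlib

section
/- Let k be a positive integer and let T be a tree on n ≥ 2k vertices. Then there exist sets V_A, V_B with V_A ∪ V_B = V(T) such that the induced subgraphs T[V_A] and T[V_B] are trees, |V_A ∩ V_B| ≤ 1, and k ≤ |V_A| < 2k. -/
/-!
Call `s` a piece at `v` if `v ∈ s` and both `s` and `sᶜ ∪ {v}` induce connected subgraphs.
If a piece `s` at `v` has a second vertex, let `c` be a component of `s \ {v}`: it contains a
neighbour `w` of `v`, and then `c` is a piece at `w` and `s \ c` is a piece at `v`. These two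
pieces are nonempty and partition `s`, so one of them still has at least `k` vertices. Starting
from the whole tree and repeating while the piece has at least `2k` vertices, we end with a
piece `A` at some `w` with `k ≤ |A| < 2k`; then `A` and `Aᶜ ∪ {w}` induce subtrees.
-/

open Set

namespace SimpleGraph

variable {V : Type*} {G : SimpleGraph V}

lemma connected_induce_singleton (v : V) : (G.induce {v}).Connected := by
  simp

lemma Connected.exists_adj_of_forall_adj_mem {c : Set V} {v : V} (hG : G.Connected)
    (hc : c.Nonempty) (hv : v ∉ c) (hclosed : ∀ x ∈ c, ∀ y, y ≠ v → G.Adj x y → y ∈ c) :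
    ∃ x ∈ c, G.Adj x v := by
  obtain ⟨u, hu⟩ := hc
  obtain ⟨p⟩ := hG.preconnected u v
  obtain ⟨d, -, hd_fst, hd_snd⟩ := p.exists_boundary_dart c hu hv
  have hd_v : d.snd = v := by_contra fun h ↦ hd_snd (hclosed _ hd_fst _ h d.adj)
  exact ⟨d.fst, hd_fst, hd_v ▸ d.adj⟩

/-- `c` is a connected component of `G[t]`, seen as a vertex set of `G`
(cf. `ConnectedComponent.maximal_connected_induce_iff`). -/
def IsComponentIn (G : SimpleGraph V) (t c : Set V) : Prop :=
  Maximal (fun d ↦ d ⊆ t ∧ (G.induce d).Connected) c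

lemma exists_isComponentIn [Finite V] {t : Set V} {u : V} (hu : u ∈ t) :
    ∃ c, u ∈ c ∧ G.IsComponentIn t c := by
  obtain ⟨c, huc, hc⟩ := Finite.exists_le_maximal (p := fun d ↦ d ⊆ t ∧ (G.induce d).Connected)
    (a := {u}) ⟨singleton_subset_iff.2 hu, connected_induce_singleton u⟩
  exact ⟨c, huc rfl, hc⟩

namespace IsComponentIn

variable {s t c d : Set V} {v x y : V}

lemma subset (hc : G.IsComponentIn t c) : c ⊆ t := hc.1.1

lemma connected (hc : G.IsComponentIn t c) : (G.induce c).Connected := hc.1.2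

lemma mem_of_adj (hc : G.IsComponentIn t c) (hx : x ∈ c) (hy : y ∈ t) (hxy : G.Adj x y) :
    y ∈ c := by
  have hconn : (G.induce (c ∪ {y})).Connected :=
    connected_induce_union hc.connected.preconnected (connected_induce_singleton y).preconnected
      hx rfl hxy
  exact hc.2 ⟨union_subset hc.subset (singleton_subset_iff.2 hy), hconn⟩ subset_union_left
    (Or.inr rfl)

lemma subset_of_inter_nonempty (hc : G.IsComponentIn t c) (hd : G.IsComponentIn t d)
    (hcd : (c ∩ d).Nonempty) : d ⊆ c :=
  subset_union_right.trans <| hc.2 ⟨union_subset hc.subset hd.subset,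
    induce_union_connected hc.connected.preconnected hd.connected.preconnected hcd⟩
    subset_union_left

lemma exists_adj (hs : (G.induce s).Connected) (hv : v ∈ s) (hc : G.IsComponentIn (s \ {v}) c) :
    ∃ x ∈ c, G.Adj x v := by
  obtain ⟨⟨u, hu⟩⟩ := hc.connected.nonempty
  obtain ⟨⟨x, _⟩, hx, hxv⟩ := hs.exists_adj_of_forall_adj_mem (c := Subtype.val ⁻¹' c)
    (v := ⟨v, hv⟩) ⟨⟨u, (hc.subset hu).1⟩, hu⟩ (fun h ↦ (hc.subset h).2 rfl)
    (fun x hx y hyv hxy ↦ hc.mem_of_adj hx ⟨y.2, fun h ↦ hyv (Subtype.ext h)⟩ hxy)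
  exact ⟨x, hx, hxv⟩

lemma connected_induce_diff [Finite V] (hs : (G.induce s).Connected) (hv : v ∈ s)
    (hc : G.IsComponentIn (s \ {v}) c) : (G.induce (s \ c)).Connected := by
  have hvc : v ∉ c := fun h ↦ (hc.subset h).2 rfl
  refine induce_connected_of_patches v ⟨hv, hvc⟩ fun {x} hx ↦ ?_
  by_cases hxv : x = v
  · subst hxv
    exact ⟨{x}, singleton_subset_iff.2 hx, rfl, rfl, Reachable.rfl⟩
  -- the component `d` of `x` in `s \ {v}` misses `c` and is attached to `v`
  obtain ⟨d, hxd, hd⟩ := exists_isComponentIn (G := G) (show x ∈ s \ {v} from ⟨hx.1, hxv⟩)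
  obtain ⟨y, hyd, hyv⟩ := hd.exists_adj hs hv
  have hds : d ⊆ s \ c := fun z hz ↦
    ⟨(hd.subset hz).1, fun hzc ↦ hx.2 (hc.subset_of_inter_nonempty hd ⟨z, hzc, hz⟩ hxd)⟩
  refine ⟨d ∪ {v}, union_subset hds (singleton_subset_iff.2 ⟨hv, hvc⟩), Or.inr rfl, Or.inl hxd,
    ?_⟩
  exact (connected_induce_union hd.connected.preconnected
    (connected_induce_singleton v).preconnected hyd rfl hyv).preconnected _ _

end IsComponentIn

structure IsPieceAt (G : SimpleGraph V) (s : Set V) (v : V) : Prop where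
  mem : v ∈ s
  connected : (G.induce s).Connected
  connected_compl_union : (G.induce (sᶜ ∪ {v})).Connected

lemma isPieceAt_univ (hG : G.Connected) (v : V) : G.IsPieceAt univ v where
  mem := mem_univ v
  connected := (induceUnivIso G).connected_iff.2 hG
  connected_compl_union := by
    rw [compl_univ, empty_union]
    exact connected_induce_singleton v

namespace IsPieceAt

variable {s : Set V} {v : V}

lemma isTree_induce (h : G.IsPieceAt s v) (hG : G.IsAcyclic) :
    (G.induce s).IsTree ∧ (G.induce (sᶜ ∪ {v})).IsTree :=
  ⟨⟨h.connected, hG.induce s⟩, ⟨h.connected_compl_union, hG.induce _⟩⟩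

variable [Finite V]

lemma exists_split (h : G.IsPieceAt s v) (hs : s.Nontrivial) :
    ∃ c ⊆ s, c.Nonempty ∧ (∃ w, G.IsPieceAt c w) ∧ G.IsPieceAt (s \ c) v := by
  obtain ⟨u, hus, huv⟩ := hs.exists_ne v
  obtain ⟨c, huc, hc⟩ := exists_isComponentIn (G := G) (show u ∈ s \ {v} from ⟨hus, huv⟩)
  obtain ⟨w, hwc, hwv⟩ := hc.exists_adj h.connected h.mem
  have hcs : c ⊆ s := hc.subset.trans sdiff_subset
  have hvc : v ∉ c := fun hv ↦ (hc.subset hv).2 rfl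
  have hrest : (G.induce (s \ c)).Connected := hc.connected_induce_diff h.connected h.mem
  refine ⟨c, hcs, ⟨u, huc⟩, ⟨w, hwc, hc.connected, ?_⟩, ⟨⟨h.mem, hvc⟩, hrest, ?_⟩⟩
  · have houter : (G.induce (sᶜ ∪ {v} ∪ (s \ c))).Connected :=
      induce_union_connected h.connected_compl_union.preconnected hrest.preconnected
        ⟨v, Or.inr rfl, h.mem, hvc⟩
    have hset : cᶜ ∪ {w} = sᶜ ∪ {v} ∪ (s \ c) ∪ {w} := by
      ext x
      have := @hcs x
      by_cases x = v <;> simp_all; tauto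
    rw [hset]
    exact connected_induce_union houter.preconnected (connected_induce_singleton w).preconnected
      (Or.inl (Or.inr rfl)) rfl hwv.symm
  · have hset : (s \ c)ᶜ ∪ {v} = sᶜ ∪ {v} ∪ c := by
      ext x
      have := @hcs x
      by_cases x = v <;> simp_all; tauto
    rw [hset]
    exact connected_induce_union h.connected_compl_union.preconnected hc.connected.preconnected
      (Or.inr rfl) hwc hwv.symm

lemma exists_isPieceAt_ncard_lt {k : ℕ} (hk : 0 < k) (h : G.IsPieceAt s v)
    (hks : k ≤ s.ncard) : ∃ a w, G.IsPieceAt a w ∧ k ≤ a.ncard ∧ a.ncard < 2 * k := by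
  induction hn : s.ncard using Nat.strong_induction_on generalizing s v with
  | _ n ih =>
    by_cases hsmall : s.ncard < 2 * k
    · exact ⟨s, v, h, hks, hsmall⟩
    obtain ⟨c, hcs, hc, ⟨w, hcw⟩, hrest⟩ :=
      h.exists_split (one_lt_ncard_iff_nontrivial.1 (by omega))
    have hsum : (s \ c).ncard + c.ncard = s.ncard := ncard_sdiff_add_ncard_of_subset hcs
    have hc_pos : 0 < c.ncard := hc.ncard_pos
    have hc_lt : c.ncard < s.ncard :=
      ncard_lt_ncard (ssubset_of_subset_of_ne hcs fun hcs ↦ (hcs ▸ hrest.mem).2 h.mem)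
    rcases le_or_gt k c.ncard with hkc | hkc
    · exact ih _ (hn ▸ hc_lt) hcw hkc rfl
    · exact ih _ (by omega) hrest (by omega) rfl

end IsPieceAt

end SimpleGraph

/-- Small subtree lemma: a tree on `n ≥ 2k` vertices can be covered by two sets
`A`, `B` inducing trees, overlapping in at most one vertex, with `k ≤ |A| < 2k`. -/
theorem stmt_0 {V : Type*} [Fintype V] [DecidableEq V] (T : SimpleGraph V)
    (hT : T.IsTree) (k : ℕ) (hk : 0 < k) (hn : 2 * k ≤ Fintype.card V) :
    ∃ A B : Finset V, A ∪ B = Finset.univ ∧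
      (T.induce (A : Set V)).IsTree ∧ (T.induce (B : Set V)).IsTree ∧
      (A ∩ B).card ≤ 1 ∧ k ≤ A.card ∧ A.card < 2 * k := by
  classical
  have : Nonempty V := Fintype.card_pos_iff.1 (by omega)
  obtain ⟨a, w, ha, hka, hak⟩ :=
    (SimpleGraph.isPieceAt_univ hT.connected (Classical.arbitrary V)).exists_isPieceAt_ncard_lt hk
      (by rw [ncard_univ, Nat.card_eq_fintype_card]; omega)
  rw [ncard_eq_toFinset_card'] at hka hak
  refine ⟨a.toFinset, a.toFinsetᶜ ∪ {w}, ?_, ?_, ?_, ?_, hka, hak⟩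
  · rw [← Finset.union_assoc, Finset.union_compl]
    exact Finset.union_eq_left.2 (Finset.subset_univ _)
  · rw [coe_toFinset]
    exact (ha.isTree_induce hT.isAcyclic).1
  · rw [Finset.coe_union, Finset.coe_compl, coe_toFinset, Finset.coe_singleton]
    exact (ha.isTree_induce hT.isAcyclic).2
  · rw [Finset.inter_union_distrib_left, Finset.inter_compl, Finset.empty_union]
    exact (Finset.card_le_card Finset.inter_subset_right).trans (Finset.card_singleton w).le
end

section
/- Let d, m be positive integers and let G be a graph with disjoint vertex subsets U, W satisfying: (i) |N_G(X) ∩ W| ≥ d|X| for all X ⊆ U with 1 ≤ |X| ≤ m; (ii) there is at least one edge between X and Y for all X ⊆ U, Y ⊆ W with |X| = |Y| ≥ m; (iii) |N_G(w) ∩ U| ≥ m for all w ∈ W. Then for every function k : U → {1,…,d} with ∑_{u∈U} k(u) = |W|, the set W can be partitioned into pairwise disjoint subsets {W_u}_{u∈U} with |W_u| = k(u) and W_u ⊆ N_G(u) ∩ W. -/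
/-!
Blow up each `u ∈ U` into `k u` copies. By Hall's theorem the copies have a matching into `W`
as soon as every nonempty `X ⊆ U` satisfies `∑_{u ∈ X} k u ≤ |N(X) ∩ W|`; the copies of `u`
then pick out `W_u`, and a perfect matching is forced by `∑ k u = |W|`.
For `|X| ≤ m` the Hall condition is (i) together with `k ≤ d`. For `|X| > m`, condition (ii)
leaves fewer than `m` vertices of `W` outside `N(X)`, and by (iii) each of them has at least `m`
neighbours in `U \ X`; so `|W \ N(X)| ≤ |U \ X| ≤ ∑_{u ∈ U \ X} k u`, which is the Hall
condition after subtracting from `∑_{u ∈ U} k u = |W|`.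
-/

open Finset

/-- Hall's theorem with capacities. -/
theorem Finset.exists_pairwiseDisjoint_subset_card_eq_of_sum_le_card_biUnion
    {ι α : Type*} [DecidableEq α] (U : Finset ι) (t : ι → Finset α) (k : ι → ℕ)
    (hall : ∀ X ⊆ U, ∑ u ∈ X, k u ≤ #(X.biUnion t)) :
    ∃ S : ι → Finset α, (∀ u ∈ U, #(S u) = k u ∧ S u ⊆ t u) ∧ (U : Set ι).PairwiseDisjoint S := by
  classical
  have hall' : ∀ s : Finset (Σ u : U, Fin (k u)), #s ≤ #(s.biUnion fun p => t p.1) := by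
    intro s
    set X := s.image Sigma.fst
    calc #s ≤ #(X.sigma fun _ => univ) := card_le_card fun p hp => by simpa [X] using ⟨_, hp⟩
      _ = ∑ u ∈ X.map (Function.Embedding.subtype _), k u := by simp [card_sigma]
      _ ≤ #((X.map (Function.Embedding.subtype _)).biUnion t) :=
          hall _ fun u hu => by obtain ⟨v, -, rfl⟩ := mem_map.1 hu; exact v.2
      _ ≤ #(s.biUnion fun p => t p.1) := card_le_card <| by
          intro a ha
          simp only [X, mem_biUnion, mem_map, mem_image] at ha ⊢
          obtain ⟨-, ⟨u, ⟨p, hp, rfl⟩, rfl⟩, ha⟩ := ha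
          exact ⟨p, hp, ha⟩
  obtain ⟨f, hf, hft⟩ := (all_card_le_biUnion_card_iff_exists_injective _).1 hall'
  refine ⟨fun u => if hu : u ∈ U then univ.image fun i => f ⟨⟨u, hu⟩, i⟩ else ∅, ?_, ?_⟩
  · intro u hu
    simp only [dif_pos hu]
    refine ⟨?_, image_subset_iff.2 fun i _ => hft _⟩
    have hinj : Function.Injective fun i : Fin (k u) => f ⟨⟨u, hu⟩, i⟩ := hf.comp sigma_mk_injective
    rw [card_image_of_injective _ hinj, card_univ, Fintype.card_fin]
  · intro u hu u' hu' hne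
    simp only [Function.onFun, dif_pos (mem_coe.1 hu), dif_pos (mem_coe.1 hu')]
    refine disjoint_left.2 fun a ha ha' => ?_
    obtain ⟨i, -, rfl⟩ := mem_image.1 ha
    obtain ⟨j, -, hji⟩ := mem_image.1 ha'
    exact hne (congrArg (fun p => p.1.1) (hf hji)).symm

theorem Finset.biUnion_eq_of_pairwiseDisjoint_of_sum_card_eq {ι α : Type*} [DecidableEq α]
    {U : Finset ι} {S : ι → Finset α} {W : Finset α} (hSW : ∀ u ∈ U, S u ⊆ W)
    (hS : (U : Set ι).PairwiseDisjoint S) (hcard : ∑ u ∈ U, #(S u) = #W) :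
    U.biUnion S = W :=
  eq_of_subset_of_card_le (biUnion_subset.2 hSW) (by rw [card_biUnion hS, hcard])

namespace SimpleGraph

variable {V : Type*} (G : SimpleGraph V) [DecidableRel G.Adj] {m : ℕ}
  {U W X : Finset V}

theorem card_filter_not_exists_adj_lt
    (h2 : ∀ X ⊆ U, ∀ Y ⊆ W, #X = #Y → m ≤ #X → ∃ x ∈ X, ∃ y ∈ Y, G.Adj x y)
    (hXU : X ⊆ U) (hmX : m ≤ #X) :
    #(W.filter fun w => ¬∃ x ∈ X, G.Adj x w) < m := by
  refine lt_of_not_ge fun hmY => ?_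
  obtain ⟨X', hX'X, hX'⟩ := exists_subset_card_eq hmX
  obtain ⟨Y', hY'Y, hY'⟩ := exists_subset_card_eq hmY
  obtain ⟨x, hx, y, hy, hxy⟩ :=
    h2 X' (hX'X.trans hXU) Y' (hY'Y.trans (filter_subset _ _)) (hX'.trans hY'.symm) hX'.ge
  exact (mem_filter.1 (hY'Y hy)).2 ⟨x, hX'X hx, hxy⟩

theorem card_filter_not_exists_adj_le_card_sdiff [DecidableEq V]
    (h3 : ∀ w ∈ W, m ≤ #(U.filter fun u => G.Adj u w))
    (hY : #(W.filter fun w => ¬∃ x ∈ X, G.Adj x w) < m) :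
    #(W.filter fun w => ¬∃ x ∈ X, G.Adj x w) ≤ #(U \ X) := by
  obtain hempty | ⟨w, hw⟩ := eq_empty_or_nonempty (W.filter fun w => ¬∃ x ∈ X, G.Adj x w)
  · rw [hempty, card_empty]
    exact Nat.zero_le _
  obtain ⟨hwW, hwX⟩ := mem_filter.1 hw
  have hsub : U.filter (fun u => G.Adj u w) ⊆ U \ X := fun u hu =>
    mem_sdiff.2 ⟨(mem_filter.1 hu).1, fun huX => hwX ⟨u, huX, (mem_filter.1 hu).2⟩⟩
  exact hY.le.trans ((h3 w hwW).trans (card_le_card hsub))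

theorem sum_le_card_filter_exists_adj [DecidableEq V] (d : ℕ)
    (h1 : ∀ X ⊆ U, 1 ≤ #X → #X ≤ m → d * #X ≤ #(W.filter fun w => ∃ x ∈ X, G.Adj x w))
    (h2 : ∀ X ⊆ U, ∀ Y ⊆ W, #X = #Y → m ≤ #X → ∃ x ∈ X, ∃ y ∈ Y, G.Adj x y)
    (h3 : ∀ w ∈ W, m ≤ #(U.filter fun u => G.Adj u w))
    (k : V → ℕ) (hk : ∀ u ∈ U, 1 ≤ k u ∧ k u ≤ d) (hsum : ∑ u ∈ U, k u = #W)
    (hXU : X ⊆ U) (hX : X.Nonempty) :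
    ∑ u ∈ X, k u ≤ #(W.filter fun w => ∃ x ∈ X, G.Adj x w) := by
  obtain hXm | hmX := le_or_gt #X m
  · calc ∑ u ∈ X, k u ≤ ∑ _u ∈ X, d := sum_le_sum fun u hu => (hk u (hXU hu)).2
      _ = d * #X := by rw [sum_const, smul_eq_mul, mul_comm]
      _ ≤ _ := h1 X hXU hX.card_pos hXm
  have hY := G.card_filter_not_exists_adj_le_card_sdiff h3
    (G.card_filter_not_exists_adj_lt h2 hXU hmX.le)
  have hsdiff : #(U \ X) ≤ ∑ u ∈ U \ X, k u := by
    rw [card_eq_sum_ones]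
    exact sum_le_sum fun u hu => (hk u (mem_sdiff.1 hu).1).1
  have hsplit : ∑ u ∈ U \ X, k u + ∑ u ∈ X, k u = #W := by rw [sum_sdiff hXU, hsum]
  have hW := card_filter_add_card_filter_not (s := W) fun w => ∃ x ∈ X, G.Adj x w
  omega

end SimpleGraph

theorem stmt_8_general {V : Type*} [DecidableEq V] (G : SimpleGraph V)
    [DecidableRel G.Adj] (d m : ℕ)
    (U W : Finset V)
    (h1 : ∀ X ⊆ U, 1 ≤ X.card → X.card ≤ m →
      d * X.card ≤ (W.filter fun w => ∃ x ∈ X, G.Adj x w).card)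
    (h2 : ∀ X ⊆ U, ∀ Y ⊆ W, X.card = Y.card → m ≤ X.card →
      ∃ x ∈ X, ∃ y ∈ Y, G.Adj x y)
    (h3 : ∀ w ∈ W, m ≤ (U.filter fun u => G.Adj u w).card)
    (k : V → ℕ) (hk : ∀ u ∈ U, 1 ≤ k u ∧ k u ≤ d)
    (hsum : ∑ u ∈ U, k u = W.card) :
    ∃ Wu : V → Finset V,
      (∀ u ∈ U, (Wu u).card = k u ∧ Wu u ⊆ W.filter fun w => G.Adj u w) ∧
      (∀ u ∈ U, ∀ u' ∈ U, u ≠ u' → Disjoint (Wu u) (Wu u')) ∧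
      W = U.biUnion Wu := by
  have hall : ∀ X ⊆ U, ∑ u ∈ X, k u ≤ #(X.biUnion fun u => W.filter fun w => G.Adj u w) := by
    intro X hXU
    obtain rfl | hX := X.eq_empty_or_nonempty
    · simp
    refine (G.sum_le_card_filter_exists_adj d h1 h2 h3 k hk hsum hXU hX).trans (card_le_card ?_)
    intro w hw
    obtain ⟨hwW, x, hx, hxw⟩ := mem_filter.1 hw
    exact mem_biUnion.2 ⟨x, hx, mem_filter.2 ⟨hwW, hxw⟩⟩
  obtain ⟨S, hS, hdisj⟩ := exists_pairwiseDisjoint_subset_card_eq_of_sum_le_card_biUnion U _ k hall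
  refine ⟨S, hS, fun u hu u' hu' hne => hdisj hu hu' hne, ?_⟩
  refine (biUnion_eq_of_pairwiseDisjoint_of_sum_card_eq (fun u hu => ?_) hdisj ?_).symm
  · exact (hS u hu).2.trans (filter_subset _ _)
  · rw [← hsum]
    exact sum_congr rfl fun u hu => (hS u hu).1

/-- Star matching lemma: under the expansion conditions (i)–(iii) between disjoint
sets `U`, `W`, for every `k : U → {1,…,d}` with `∑ k(u) = |W|`, the set `W` can be
partitioned into stars `{W_u}` with `|W_u| = k(u)` and `W_u ⊆ N_G(u) ∩ W`. -/
theorem stmt_8 {V : Type*} [Fintype V] [DecidableEq V] (G : SimpleGraph V)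
    [DecidableRel G.Adj] (d m : ℕ) (hd : 0 < d) (hm : 0 < m)
    (U W : Finset V) (hUW : Disjoint U W)
    (h1 : ∀ X ⊆ U, 1 ≤ X.card → X.card ≤ m →
      d * X.card ≤ (W.filter fun w => ∃ x ∈ X, G.Adj x w).card)
    (h2 : ∀ X ⊆ U, ∀ Y ⊆ W, X.card = Y.card → m ≤ X.card →
      ∃ x ∈ X, ∃ y ∈ Y, G.Adj x y)
    (h3 : ∀ w ∈ W, m ≤ (U.filter fun u => G.Adj u w).card)
    (k : V → ℕ) (hk : ∀ u ∈ U, 1 ≤ k u ∧ k u ≤ d)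
    (hsum : ∑ u ∈ U, k u = W.card) :
    ∃ Wu : V → Finset V,
      (∀ u ∈ U, (Wu u).card = k u ∧ Wu u ⊆ W.filter fun w => G.Adj u w) ∧
      (∀ u ∈ U, ∀ u' ∈ U, u ≠ u' → Disjoint (Wu u) (Wu u')) ∧
      W = U.biUnion Wu :=
  stmt_8_general G d m U W h1 h2 h3 k hk hsum
end
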